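/- The standard face-centred icosahedral module M_F = {(β,γ,δ)ᵗ ∈ M_B : β + γ + δ ≡ 0 (mod 2)} equals {(β,γ,δ)ᵗ : β,γ,δ ∈ ℤ[τ], β ≡ τγ ≡ τ²δ (mod 2)}, and M_F is a subgroup of index 4 in M_B. -/

import Mathlib

noncomputable def τ : ℝ := (1 + Real.sqrt 5) / 2

/-- The ring `ℤ[τ]`, as a subset of `ℝ`. -/
def Ztau : Set ℝ := {x | ∃ a b : ℤ, x = (a : ℝ) + (b : ℝ) * τ}

/-- `x ≡ y (mod 2)` in `ℤ[τ]`. -/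
def ModTwo (x y : ℝ) : Prop := ∃ w ∈ Ztau, x - y = 2 * w

/-- The standard body-centred icosahedral module `M_B`. -/
def MB : Set (Fin 3 → ℝ) :=
  {v | (∀ i, v i ∈ Ztau) ∧ ModTwo (τ ^ 2 * v 0 + τ * v 1 + v 2) 0}

/-- The standard face-centred icosahedral module `M_F`, defined as the set of
elements of `M_B` whose coordinate sum is `≡ 0 (mod 2)`. -/
def MF : Set (Fin 3 → ℝ) := {v | v ∈ MB ∧ ModTwo (v 0 + v 1 + v 2) 0}

/-!
Reduction mod 2 identifies `ℤ[τ]/2` with the field `𝔽₄ = 𝔽₂[τ]`, in which `τ² = τ + 1`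
and `τ³ = 1`. There, the conditions `τ²β + τγ + δ = 0` and `β + γ + δ = 0` are equivalent to
`β = τγ = τ²δ`, and lifting this linear algebra to explicit identities in `ℤ[τ]` gives the
description of `M_F`. The coordinate sum `M_B → ℤ[τ]/2` is additive with kernel `M_F`, and it is
onto: the constant vector `(c, c, c)` lies in `M_B` (as `τ² + τ + 1 = 2τ²`) and has sum
`3c ≡ c`. So the constant vectors with `c ∈ {0, 1, τ, 1 + τ}` represent the four cosets.
-/

lemma tau_sq : τ ^ 2 = τ + 1 := Real.goldenRatio_sq

def ztauSubring : Subring ℝ where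
  carrier := Ztau
  mul_mem' := by
    rintro _ _ ⟨a, b, rfl⟩ ⟨c, d, rfl⟩
    exact ⟨a * c + b * d, a * d + b * c + b * d,
      by push_cast; linear_combination (b * d : ℝ) * tau_sq⟩
  one_mem' := ⟨1, 0, by simp⟩
  add_mem' := by
    rintro _ _ ⟨a, b, rfl⟩ ⟨c, d, rfl⟩
    exact ⟨a + c, b + d, by push_cast; ring⟩
  zero_mem' := ⟨0, 0, by simp⟩
  neg_mem' := by
    rintro _ ⟨a, b, rfl⟩
    exact ⟨-a, -b, by push_cast; ring⟩

lemma tau_mem_ztauSubring : τ ∈ ztauSubring := ⟨0, 1, by simp⟩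

lemma eq_zero_of_intCast_add_intCast_mul_tau_eq_zero {a b : ℤ} (h : (a : ℝ) + b * τ = 0) :
    a = 0 ∧ b = 0 := by
  obtain rfl | hb := eq_or_ne b 0
  · exact ⟨by exact_mod_cast (by simpa using h), rfl⟩
  · have hbτ : (b : ℝ) * τ = (-a : ℤ) := by push_cast; linear_combination h
    exact absurd hbτ ((Real.goldenRatio_irrational.intCast_mul hb).ne_int (-a))

lemma modTwo_intCast_add_intCast_mul_tau_iff (a b c d : ℤ) :
    ModTwo (a + b * τ) (c + d * τ) ↔ 2 ∣ a - c ∧ 2 ∣ b - d := by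
  constructor
  · rintro ⟨_, ⟨p, q, rfl⟩, h⟩
    obtain ⟨hp, hq⟩ := eq_zero_of_intCast_add_intCast_mul_tau_eq_zero
      (a := a - c - 2 * p) (b := b - d - 2 * q) (by push_cast; linear_combination h)
    exact ⟨⟨p, by omega⟩, ⟨q, by omega⟩⟩
  · rintro ⟨⟨p, hp⟩, ⟨q, hq⟩⟩
    refine ⟨p + q * τ, ⟨p, q, rfl⟩, ?_⟩
    have hp' : (a - c : ℝ) = 2 * p := by exact_mod_cast hp
    have hq' : (b - d : ℝ) = 2 * q := by exact_mod_cast hq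
    linear_combination hp' + τ * hq'

lemma ModTwo.sub {x y x' y' : ℝ} (h : ModTwo x y) (h' : ModTwo x' y') :
    ModTwo (x - x') (y - y') := by
  obtain ⟨w, hw, hxy⟩ := h
  obtain ⟨w', hw', hxy'⟩ := h'
  exact ⟨w - w', ztauSubring.sub_mem hw hw', by linear_combination hxy - hxy'⟩

lemma sub_mem_MB {v w : Fin 3 → ℝ} (hv : v ∈ MB) (hw : w ∈ MB) : v - w ∈ MB := by
  refine ⟨fun i => ztauSubring.sub_mem (hv.1 i) (hw.1 i), ?_⟩
  have h := hv.2.sub hw.2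
  rw [sub_zero] at h
  convert h using 1
  simp only [Pi.sub_apply]
  ring

lemma sub_mem_MF {v w : Fin 3 → ℝ} (hv : v ∈ MF) (hw : w ∈ MF) : v - w ∈ MF := by
  refine ⟨sub_mem_MB hv.1 hw.1, ?_⟩
  have h := hv.2.sub hw.2
  rw [sub_zero] at h
  convert h using 1
  simp only [Pi.sub_apply]
  ring

/-- The identities behind both directions are the `ℤ[τ]`-linear relations
`β - τγ = (τ - 1)(A - S) - 2γ`, `τγ - τ²δ = τA - S - 2τ(β + δ)`,
`A = τ²(β - τγ) + (τ - 2)(τγ - τ²δ) + 4τγ` and `S = (β - τγ) + (τ - 2)(τγ - τ²δ) + 2τγ`,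
where `A = τ²β + τγ + δ` and `S = β + γ + δ`. -/
lemma mem_MF_iff_modTwo {v : Fin 3 → ℝ} (hv : ∀ i, v i ∈ Ztau) :
    v ∈ MF ↔ ModTwo (v 0) (τ * v 1) ∧ ModTwo (τ * v 1) (τ ^ 2 * v 2) := by
  have hβ : v 0 ∈ ztauSubring := hv 0
  have hγ : v 1 ∈ ztauSubring := hv 1
  have hδ : v 2 ∈ ztauSubring := hv 2
  have hτ := tau_mem_ztauSubring
  constructor
  · rintro ⟨⟨-, a, ha, hA⟩, s, hs, hS⟩
    refine ⟨⟨(τ - 1) * (a - s) - v 1, ?_, ?_⟩, ⟨τ * a - s - τ * (v 0 + v 2), ?_, ?_⟩⟩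
    · exact sub_mem (mul_mem (sub_mem hτ (one_mem _)) (sub_mem ha hs)) hγ
    · linear_combination (τ - 1) * (hA - hS) - (v 0 * τ + v 1) * tau_sq
    · exact sub_mem (sub_mem (mul_mem hτ ha) hs) (mul_mem hτ (add_mem hβ hδ))
    · linear_combination τ * hA - hS - (v 0 * τ + v 0 + v 1 + v 2) * tau_sq
  · rintro ⟨⟨p, hp, hP⟩, q, hq, hQ⟩
    have hτ2 : τ - 2 ∈ ztauSubring := sub_mem hτ (ofNat_mem _ 2)
    refine ⟨⟨hv, τ ^ 2 * p + (τ - 2) * q + 2 * τ * v 1, ?_, ?_⟩,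
      p + (τ - 2) * q + τ * v 1, ?_, ?_⟩
    · exact add_mem (add_mem (mul_mem (pow_mem hτ 2) hp) (mul_mem hτ2 hq))
        (mul_mem (mul_mem (ofNat_mem _ 2) hτ) hγ)
    · linear_combination τ ^ 2 * hP + (τ - 2) * hQ + (v 1 * τ + v 2 * τ - v 2) * tau_sq
    · exact add_mem (add_mem hp (mul_mem hτ2 hq)) (mul_mem hτ hγ)
    · linear_combination hP + (τ - 2) * hQ + (v 2 * τ - v 1 - v 2) * tau_sq

def residueCoords : Fin 4 → ℤ × ℤ := ![(0, 0), (1, 0), (0, 1), (1, 1)]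

noncomputable def residue (i : Fin 4) : ℝ := (residueCoords i).1 + (residueCoords i).2 * τ

lemma residue_mem_Ztau (i : Fin 4) : residue i ∈ Ztau := ⟨_, _, rfl⟩

lemma existsUnique_residueCoords_parity (a b : ℤ) :
    ∃! i : Fin 4, 2 ∣ a - (residueCoords i).1 ∧ 2 ∣ b - (residueCoords i).2 := by
  have key : ∀ i : Fin 4, (2 ∣ a - (residueCoords i).1 ∧ 2 ∣ b - (residueCoords i).2) ↔
      i = if 2 ∣ a then (if 2 ∣ b then 0 else 2) else (if 2 ∣ b then 1 else 3) := by
    intro i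
    fin_cases i <;> by_cases ha : 2 ∣ a <;> by_cases hb : 2 ∣ b <;>
      simp [residueCoords, ha, hb] <;> omega
  simp_rw [key]
  exact existsUnique_eq

lemma existsUnique_modTwo_residue {x : ℝ} (hx : x ∈ Ztau) :
    ∃! i : Fin 4, ModTwo x (residue i) := by
  obtain ⟨a, b, rfl⟩ := hx
  simp only [residue, modTwo_intCast_add_intCast_mul_tau_iff]
  exact existsUnique_residueCoords_parity a b

lemma const_mem_MB {c : ℝ} (hc : c ∈ Ztau) : (fun _ => c) ∈ MB :=
  ⟨fun _ => hc, τ ^ 2 * c, mul_mem (pow_mem tau_mem_ztauSubring 2) hc,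
    by linear_combination -c * tau_sq⟩

lemma sub_const_mem_MF_iff {v : Fin 3 → ℝ} {c : ℝ} (hv : v ∈ MB) (hc : c ∈ Ztau) :
    v - (fun _ => c) ∈ MF ↔ ModTwo (v 0 + v 1 + v 2) c := by
  simp only [MF, Set.mem_ofPred_eq, sub_mem_MB hv (const_mem_MB hc), true_and, Pi.sub_apply]
  constructor
  · rintro ⟨w, hw, h⟩
    exact ⟨w + c, add_mem (show w ∈ ztauSubring from hw) hc, by linear_combination h⟩
  · rintro ⟨w, hw, h⟩
    exact ⟨w - c, sub_mem (show w ∈ ztauSubring from hw) hc, by linear_combination h⟩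

/-- `M_F` equals `{(β,γ,δ) : β,γ,δ ∈ ℤ[τ], β ≡ τγ ≡ τ²δ (mod 2)}`, and `M_F`
is a subgroup of index `4` in `M_B` (witnessed by four coset representatives). -/
theorem MF_characterization_and_index_four :
    MF = {v | (∀ i, v i ∈ Ztau) ∧ ModTwo (v 0) (τ * v 1) ∧ ModTwo (τ * v 1) (τ ^ 2 * v 2)} ∧
    (∀ v ∈ MF, v ∈ MB) ∧
    (∀ v w, v ∈ MF → w ∈ MF → v - w ∈ MF) ∧
    ∃ r : Fin 4 → (Fin 3 → ℝ), (∀ i, r i ∈ MB) ∧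
      ∀ v ∈ MB, ∃! i : Fin 4, v - r i ∈ MF := by
  refine ⟨?_, fun v hv => hv.1, fun v w => sub_mem_MF, fun i _ => residue i,
    fun i => const_mem_MB (residue_mem_Ztau i), fun v hv => ?_⟩
  · ext v
    exact ⟨fun hv => ⟨hv.1.1, (mem_MF_iff_modTwo hv.1.1).1 hv⟩,
      fun hv => (mem_MF_iff_modTwo hv.1).2 hv.2⟩
  · simp_rw [sub_const_mem_MF_iff hv (residue_mem_Ztau _)]
    exact existsUnique_modTwo_residue
      (add_mem (add_mem (show v 0 ∈ ztauSubring from hv.1 0) (hv.1 1)) (hv.1 2))
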